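/- arXiv:quant-ph/0604096 — 8 statements merged into one kernel-verified Lean document; each statement's English description precedes it below -/
import Mathlib

section
/- Let d ≥ 1, k ≥ 2, and suppose {φ_{A,a}}_{a=0}^{d-1} (A = 0,…,k−1) are k mutually unbiased orthonormal bases of ℂ^d. Define vectors Φ_{A,a} in EuclideanSpace ℂ (Fin d^{k−1} × Fin d) by Φ_{A,a}(i,j) = conj(φ_{A,a}(i))·φ_{A,a}(j) for i < d and Φ_{A,a}(i,j) = 0 for i ≥ d. Then there exist a function s : Fin d^k → Fin k → Fin d and an orthonormal basis (e_I)_{I ∈ Fin d^k} of EuclideanSpace ℂ (Fin d^{k−1} × Fin d) such that ⟨e_I, Φ_{A,a}⟩ = 0 whenever s(I)(A) ≠ a. In other words, the Mean King's problem with k mutually unbiased bases has a solution for every level d. -/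
open scoped InnerProductSpace
open Finset ComplexConjugate

/-!
Fix a primitive `d`-th root of unity `ζ` and put `ψ A b = ∑ a, ζ ^ (a b) • Φ A a`. Since
`⟪Φ A a, Φ A' a'⟫ = ‖⟪φ A a, φ A' a'⟫‖²`, character orthogonality shows that the `ψ A b`
with `b ≠ 0` are pairwise orthogonal of norm `√d` and orthogonal to `ψ A 0`, while `ψ A 0`
(the maximally entangled state, up to scaling) does not depend on `A`. Label `ψ A b / √d` by the
function `Pi.single A b : Fin k → Fin d` and extend this orthonormal family to an orthonormal
basis `(B h)` indexed by all `h : Fin k → Fin d`; the dimension is exactly `d ^ k`. The Fourier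
transform `e J ∝ ∑ h, conj (∏ X, ζ ^ (J X h X)) • B h` is again an orthonormal basis, and as
`Φ A a ∝ ∑ b, conj (ζ ^ (a b)) • B (Pi.single A b)`, the inner product `⟪e J, Φ A a⟫` is a
multiple of `∑ b, conj (ζ ^ (a b)) ζ ^ (J A b)`, which vanishes unless `J A = a`. So `s J = J`.
-/

section RootOfUnity

variable {d : ℕ} {ζ : ℂ}

theorem IsPrimitiveRoot.sum_conj_pow_mul_pow (hζ : IsPrimitiveRoot ζ d) (b c : Fin d) :
    ∑ a : Fin d, conj (ζ ^ ((a : ℕ) * b)) * ζ ^ ((a : ℕ) * c) = if b = c then (d : ℂ) else 0 := by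
  have hd : d ≠ 0 := b.pos.ne'
  have hinv : ∀ m : ℕ, conj (ζ ^ m) = (ζ ^ m)⁻¹ := fun m => by
    rw [Complex.inv_eq_conj (by rw [norm_pow, hζ.norm'_eq_one hd, one_pow])]
  set x := conj (ζ ^ (b : ℕ)) * ζ ^ (c : ℕ) with hx_def
  have hterm : ∀ a : Fin d, conj (ζ ^ ((a : ℕ) * b)) * ζ ^ ((a : ℕ) * c) = x ^ (a : ℕ) := by
    intro a
    simp only [x, mul_pow, ← map_pow, ← pow_mul, mul_comm (a : ℕ)]
  have hpow : ∀ m : ℕ, (ζ ^ m) ^ d = 1 := fun m => by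
    rw [← pow_mul, mul_comm, pow_mul, hζ.pow_eq_one, one_pow]
  have hx : x ^ d = 1 := by rw [mul_pow, ← map_pow, hpow, hpow, map_one, one_mul]
  have hx_eq_one : x = 1 ↔ b = c := by
    rw [hx_def, hinv, inv_mul_eq_one₀ (pow_ne_zero _ (hζ.ne_zero hd)), ← Fin.val_inj]
    exact ⟨fun h => hζ.pow_inj b.isLt c.isLt h, congrArg _⟩
  rw [Finset.sum_congr rfl fun a _ => hterm a, Fin.sum_univ_eq_sum_range (x ^ ·)]
  split_ifs with h
  · simp [hx_eq_one.mpr h]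
  · rw [geom_sum_eq (mt hx_eq_one.mp h), hx, sub_self, zero_div]

theorem IsPrimitiveRoot.sum_conj_pow_mul_pow' (hζ : IsPrimitiveRoot ζ d) (b c : Fin d) :
    ∑ a : Fin d, conj (ζ ^ ((b : ℕ) * a)) * ζ ^ ((c : ℕ) * a) = if b = c then (d : ℂ) else 0 := by
  simpa only [Nat.mul_comm] using hζ.sum_conj_pow_mul_pow b c

end RootOfUnity

theorem Pi.single_eq_single_iff {ι M : Type*} [DecidableEq ι] [Zero M] {i j : ι} {a b : M} :
    (Pi.single i a : ι → M) = Pi.single j b ↔ i = j ∧ a = b ∨ a = 0 ∧ b = 0 := by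
  constructor
  · intro h
    by_cases hij : i = j
    · subst hij
      exact Or.inl ⟨rfl, Pi.single_injective i h⟩
    · have hi := congrFun h i
      have hj := congrFun h j
      simp only [Pi.single_eq_same, Pi.single_eq_of_ne hij, Pi.single_eq_of_ne (Ne.symm hij)]
        at hi hj
      exact Or.inr ⟨hi, hj.symm⟩
  · rintro (⟨rfl, rfl⟩ | ⟨rfl, rfl⟩) <;> simp

namespace MeanKing

variable {E : Type*} [NormedAddCommGroup E] [InnerProductSpace ℂ E] {d k : ℕ}

theorem inner_sum_smul_sum_smul_of_inner_eq {ι κ : Type*} [Fintype ι] [Fintype κ]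
    {x : ι → E} {y : κ → E} {c : ℂ} (h : ∀ i j, ⟪x i, y j⟫_ℂ = c) (α : ι → ℂ) (β : κ → ℂ) :
    ⟪∑ i, α i • x i, ∑ j, β j • y j⟫_ℂ = conj (∑ i, α i) * (∑ j, β j) * c := by
  rw [map_sum, sum_mul_sum, sum_mul, sum_inner]
  refine sum_congr rfl fun i _ => ?_
  rw [inner_smul_left, inner_sum, sum_mul, mul_sum]
  refine sum_congr rfl fun j _ => ?_
  rw [inner_smul_right, h]
  ring

def IsUnbiasedFamily (Φ : Fin k → Fin d → E) : Prop :=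
  ∀ A a A' a', ⟪Φ A a, Φ A' a'⟫_ℂ = if A = A' then (if a = a' then 1 else 0) else (d : ℂ)⁻¹

noncomputable def fourierFamily (ζ : ℂ) (Φ : Fin k → Fin d → E) (A : Fin k) (b : Fin d) : E :=
  ∑ a : Fin d, ζ ^ ((a : ℕ) * b) • Φ A a

variable {Φ : Fin k → Fin d → E} {ζ : ℂ}

theorem IsUnbiasedFamily.orthonormal (hΦ : IsUnbiasedFamily Φ) (A : Fin k) :
    Orthonormal ℂ (Φ A) :=
  orthonormal_iff_ite.mpr fun a a' => by simpa using hΦ A a A a'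

theorem IsUnbiasedFamily.inner_of_ne (hΦ : IsUnbiasedFamily Φ) {A A' : Fin k} (hA : A ≠ A')
    (a a' : Fin d) : ⟪Φ A a, Φ A' a'⟫_ℂ = (d : ℂ)⁻¹ := by
  simpa [hA] using hΦ A a A' a'

theorem eq_smul_sum_fourierFamily (hζ : IsPrimitiveRoot ζ d) (A : Fin k) (a : Fin d) :
    Φ A a = (d : ℂ)⁻¹ • ∑ b : Fin d, conj (ζ ^ ((a : ℕ) * b)) • fourierFamily ζ Φ A b := by
  have hd : (d : ℂ) ≠ 0 := Nat.cast_ne_zero.mpr a.pos.ne'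
  simp only [fourierFamily, smul_sum, smul_smul]
  rw [sum_comm]
  simp only [← sum_smul, ← mul_sum, hζ.sum_conj_pow_mul_pow', mul_ite, mul_zero,
    inv_mul_cancel₀ hd, ite_smul, zero_smul, one_smul, sum_ite_eq, mem_univ, if_true]

theorem inner_fourierFamily [NeZero d] (hζ : IsPrimitiveRoot ζ d) (hΦ : IsUnbiasedFamily Φ)
    (A A' : Fin k) (b b' : Fin d) :
    ⟪fourierFamily ζ Φ A b, fourierFamily ζ Φ A' b'⟫_ℂ =
      if A = A' ∧ b = b' ∨ b = 0 ∧ b' = 0 then (d : ℂ) else 0 := by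
  by_cases hA : A = A'
  · subst hA
    rw [fourierFamily, fourierFamily, (hΦ.orthonormal A).inner_sum, hζ.sum_conj_pow_mul_pow]
    refine if_congr ?_ rfl rfl
    rw [eq_self_iff_true, true_and, or_iff_left_of_imp fun h => h.1.trans h.2.symm]
  · have hsum (c : Fin d) : ∑ a : Fin d, ζ ^ ((a : ℕ) * c) = if c = 0 then (d : ℂ) else 0 := by
      simpa [eq_comm] using hζ.sum_conj_pow_mul_pow 0 c
    rw [fourierFamily, fourierFamily, inner_sum_smul_sum_smul_of_inner_eq (hΦ.inner_of_ne hA),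
      hsum, hsum]
    simp only [hA, false_and, false_or]
    split_ifs <;> simp_all [Nat.cast_ne_zero.mpr (NeZero.ne d)]

theorem fourierFamily_zero_eq [NeZero d] (hζ : IsPrimitiveRoot ζ d) (hΦ : IsUnbiasedFamily Φ)
    (A A' : Fin k) : fourierFamily ζ Φ A 0 = fourierFamily ζ Φ A' 0 := by
  rw [← sub_eq_zero, ← inner_self_eq_zero (𝕜 := ℂ), inner_sub_left, inner_sub_right,
    inner_sub_right]
  simp only [inner_fourierFamily hζ hΦ, and_self, or_true, if_true, sub_self]

theorem exists_orthonormalBasis_fourierFamily [NeZero d] [FiniteDimensional ℂ E]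
    (hdim : Module.finrank ℂ E = d ^ k) (hζ : IsPrimitiveRoot ζ d) (hΦ : IsUnbiasedFamily Φ) :
    ∃ B : OrthonormalBasis (Fin k → Fin d) ℂ E,
      ∀ A b, fourierFamily ζ Φ A b = ((√(d : ℝ) : ℝ) : ℂ) • B (Pi.single A b) := by
  set r : ℂ := ((√(d : ℝ) : ℝ) : ℂ)
  have hr : conj r = r := Complex.conj_ofReal _
  have hrr : r * r = d := by
    rw [← Complex.ofReal_mul, Real.mul_self_sqrt (Nat.cast_nonneg d), Complex.ofReal_natCast]
  have hr0 : r ≠ 0 := fun h => NeZero.ne d (by simpa [h] using hrr.symm)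
  set f : Fin k × Fin d → (Fin k → Fin d) := fun p => Pi.single p.1 p.2
  set g : Fin k × Fin d → E := fun p => r⁻¹ • fourierFamily ζ Φ p.1 p.2
  have hfg : Function.FactorsThrough g f := by
    rintro ⟨A, b⟩ ⟨A', b'⟩ h
    rcases Pi.single_eq_single_iff.mp h with ⟨rfl, rfl⟩ | ⟨rfl, rfl⟩
    · rfl
    · simp only [g, fourierFamily_zero_eq hζ hΦ A A']
  have horth : Orthonormal ℂ ((Set.range f).domRestrict (Function.extend f g 0)) := by
    rw [orthonormal_iff_ite]
    rintro ⟨_, p, rfl⟩ ⟨_, q, rfl⟩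
    simp only [Set.domRestrict_apply, hfg.extend_apply, Subtype.ext_iff, g, f, inner_smul_left,
      inner_smul_right, inner_fourierFamily hζ hΦ, Pi.single_eq_single_iff, map_inv₀, hr]
    split_ifs
    · rw [← hrr]; field_simp
    · simp
  obtain ⟨B, hB⟩ := horth.exists_orthonormalBasis_extension_of_card_eq (by simp [hdim])
  refine ⟨B, fun A b => ?_⟩
  rw [hB _ ⟨(A, b), rfl⟩, hfg.extend_apply, smul_inv_smul₀ hr0]

noncomputable def fourierChar (ζ : ℂ) (J h : Fin k → Fin d) : ℂ :=
  ∏ X, ζ ^ ((J X : ℕ) * h X)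

theorem fourierChar_single [NeZero d] (J : Fin k → Fin d) (A : Fin k) (b : Fin d) :
    fourierChar ζ J (Pi.single A b) = ζ ^ ((J A : ℕ) * b) := by
  rw [fourierChar, Fintype.prod_eq_single A fun X hX => by simp [Pi.single_eq_of_ne hX],
    Pi.single_eq_same]

theorem sum_conj_fourierChar_mul (hζ : IsPrimitiveRoot ζ d) (J J' : Fin k → Fin d) :
    ∑ h, conj (fourierChar ζ J h) * fourierChar ζ J' h = if J = J' then (d : ℂ) ^ k else 0 := by
  simp only [fourierChar, map_prod, ← prod_mul_distrib]
  rw [← Fintype.prod_sum fun X (b : Fin d) => conj (ζ ^ ((J X : ℕ) * b)) * ζ ^ ((J' X : ℕ) * b)]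
  simp only [hζ.sum_conj_pow_mul_pow', prod_ite_zero, prod_const, card_univ, Fintype.card_fin,
    mem_univ, true_implies, funext_iff]

theorem orthonormal_sum_fourierChar_smul [NeZero d] (hζ : IsPrimitiveRoot ζ d)
    (B : OrthonormalBasis (Fin k → Fin d) ℂ E) :
    Orthonormal ℂ fun J =>
      ∑ h, ((((√(d : ℝ) : ℝ) : ℂ) ^ k)⁻¹ * conj (fourierChar ζ J h)) • B h := by
  set c : ℂ := (((√(d : ℝ) : ℝ) : ℂ) ^ k)⁻¹
  have hc : conj c * c * (d : ℂ) ^ k = 1 := by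
    rw [map_inv₀, map_pow, Complex.conj_ofReal, ← mul_inv, ← mul_pow, ← Complex.ofReal_mul,
      Real.mul_self_sqrt (Nat.cast_nonneg d), Complex.ofReal_natCast,
      inv_mul_cancel₀ (pow_ne_zero k (Nat.cast_ne_zero.mpr (NeZero.ne d)))]
  rw [orthonormal_iff_ite]
  intro J J'
  rw [B.orthonormal.inner_sum]
  calc ∑ h, conj (c * conj (fourierChar ζ J h)) * (c * conj (fourierChar ζ J' h))
      = conj c * c * ∑ h, conj (fourierChar ζ J' h) * fourierChar ζ J h := by
        rw [mul_sum]
        exact sum_congr rfl fun h _ => by rw [map_mul, Complex.conj_conj]; ring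
    _ = if J = J' then 1 else 0 := by
        rw [sum_conj_fourierChar_mul hζ]
        by_cases hJ : J = J'
        · simp [hJ, hc]
        · simp [hJ, Ne.symm hJ]

theorem exists_orthonormalBasis_inner_eq_zero [NeZero d] [FiniteDimensional ℂ E]
    (hdim : Module.finrank ℂ E = d ^ k) (hΦ : IsUnbiasedFamily Φ) :
    ∃ e : OrthonormalBasis (Fin k → Fin d) ℂ E, ∀ J A a, J A ≠ a → ⟪e J, Φ A a⟫_ℂ = 0 := by
  obtain ⟨ζ, hζ⟩ : ∃ ζ : ℂ, IsPrimitiveRoot ζ d :=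
    ⟨_, Complex.isPrimitiveRoot_exp d (NeZero.ne d)⟩
  obtain ⟨B, hB⟩ := exists_orthonormalBasis_fourierFamily hdim hζ hΦ
  have he := orthonormal_sum_fourierChar_smul hζ B
  refine ⟨OrthonormalBasis.mk he (he.linearIndependent.span_eq_top_of_card_eq_finrank
    (by simp [hdim])).ge, fun J A a hJa => ?_⟩
  rw [OrthonormalBasis.coe_mk, eq_smul_sum_fourierFamily (Φ := Φ) hζ A a, inner_smul_right,
    inner_sum]
  simp only [hB, inner_smul_right, B.orthonormal.inner_left_fintype, fourierChar_single,
    map_mul, Complex.conj_conj]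
  simp only [mul_left_comm ((starRingEnd ℂ) (ζ ^ _)), ← mul_sum, hζ.sum_conj_pow_mul_pow',
    if_neg (Ne.symm hJa), mul_zero]

theorem inner_eq_norm_inner_sq_of_eq_conj_mul {n : ℕ} (hdn : d ≤ n)
    {x y : EuclideanSpace ℂ (Fin d)} {X Y : EuclideanSpace ℂ (Fin n × Fin d)}
    (hX : ∀ i j, X (i, j) = if h : (i : ℕ) < d then conj (x ⟨i, h⟩) * x j else 0)
    (hY : ∀ i j, Y (i, j) = if h : (i : ℕ) < d then conj (y ⟨i, h⟩) * y j else 0) :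
    ⟪X, Y⟫_ℂ = (‖⟪x, y⟫_ℂ‖ : ℂ) ^ 2 := by
  have hrestrict : ⟪X, Y⟫_ℂ =
      ∑ i : Fin d, ∑ j : Fin d, conj (conj (x i) * x j) * (conj (y i) * y j) := by
    rw [PiLp.inner_apply, Fintype.sum_prod_type]
    symm
    refine Fintype.sum_of_injective (Fin.castLE hdn) (Fin.castLE_injective hdn) _ _
      (fun i hi => ?_) (fun i => ?_)
    · have hid : ¬(i : ℕ) < d := fun h => hi ⟨⟨i, h⟩, rfl⟩
      simp [hX, hY, hid]
    · simp [hX, hY, RCLike.inner_apply, mul_comm]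
  rw [hrestrict, ← Complex.conj_mul', PiLp.inner_apply, map_sum, sum_mul_sum]
  refine sum_congr rfl fun i _ => sum_congr rfl fun j _ => ?_
  simp only [RCLike.inner_apply, map_mul, Complex.conj_conj]
  ring

theorem isUnbiasedFamily_of_mutuallyUnbiased {n : ℕ} (hdn : d ≤ n)
    (φ : Fin k → OrthonormalBasis (Fin d) ℂ (EuclideanSpace ℂ (Fin d)))
    (hMUB : ∀ A A' : Fin k, A ≠ A' → ∀ a a' : Fin d,
      ‖(⟪φ A a, φ A' a'⟫_ℂ)‖ ^ 2 = 1 / (d : ℝ))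
    (Φ : Fin k → Fin d → EuclideanSpace ℂ (Fin n × Fin d))
    (hΦ : ∀ (A : Fin k) (a : Fin d) (i : Fin n) (j : Fin d),
      Φ A a (i, j) = if h : (i : ℕ) < d then conj (φ A a ⟨i, h⟩) * φ A a j else 0) :
    IsUnbiasedFamily Φ := by
  intro A a A' a'
  rw [inner_eq_norm_inner_sq_of_eq_conj_mul hdn (hΦ A a) (hΦ A' a')]
  split_ifs with hA ha
  · subst hA ha
    simp [(φ A).orthonormal.1 a]
  · subst hA
    simp [orthonormal_iff_ite.mp (φ A).orthonormal a a', ha]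
  · rw [← Complex.ofReal_pow, hMUB A A' hA a a']
    push_cast
    ring

end MeanKing

/-- **The Mean King's problem always has a solution.**
Given `k` mutually unbiased orthonormal bases of `ℂ^d`, there exist an estimation
function `s` and an orthonormal basis of `ℂ^{d^{k-1}} ⊗ ℂ^d` satisfying the survival
condition. -/
theorem mean_king_problem_has_solution
    (d k : ℕ) (hd : 1 ≤ d) (hk : 2 ≤ k)
    (φ : Fin k → OrthonormalBasis (Fin d) ℂ (EuclideanSpace ℂ (Fin d)))
    (hMUB : ∀ A A' : Fin k, A ≠ A' → ∀ a a' : Fin d,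
      ‖(⟪φ A a, φ A' a'⟫_ℂ)‖ ^ 2 = 1 / (d : ℝ))
    (Φ : Fin k → Fin d → EuclideanSpace ℂ (Fin (d ^ (k - 1)) × Fin d))
    (hΦ : ∀ (A : Fin k) (a : Fin d) (i : Fin (d ^ (k - 1))) (j : Fin d),
      Φ A a (i, j) =
        if h : (i : ℕ) < d then (starRingEnd ℂ) (φ A a ⟨i, h⟩) * φ A a j else 0) :
    ∃ (s : Fin (d ^ k) → Fin k → Fin d)
      (e : OrthonormalBasis (Fin (d ^ k)) ℂ (EuclideanSpace ℂ (Fin (d ^ (k - 1)) × Fin d))),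
      ∀ (I : Fin (d ^ k)) (A : Fin k) (a : Fin d),
        s I A ≠ a → ⟪e I, Φ A a⟫_ℂ = 0 := by
  have : NeZero d := ⟨by omega⟩
  have hdim : Module.finrank ℂ (EuclideanSpace ℂ (Fin (d ^ (k - 1)) × Fin d)) = d ^ k := by
    rw [finrank_euclideanSpace, Fintype.card_prod, Fintype.card_fin, Fintype.card_fin, ← pow_succ,
      Nat.sub_add_cancel (by omega)]
  have hΦ_unbiased := MeanKing.isUnbiasedFamily_of_mutuallyUnbiased
    (Nat.le_self_pow (by omega) d) φ hMUB Φ hΦ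
  obtain ⟨e, he⟩ := MeanKing.exists_orthonormalBasis_inner_eq_zero hdim hΦ_unbiased
  exact ⟨fun I => finFunctionFinEquiv.symm I, e.reindex finFunctionFinEquiv,
    fun I A a h => by simpa using he _ A a h⟩
end

section
/- Let d, d' ≥ 1 with d ≤ d', k ≥ 1, and let Φ_{A,a} (A ∈ Fin k, a ∈ Fin d) be vectors in EuclideanSpace ℂ (Fin d' × Fin d) satisfying the MUB Gram condition ⟨Φ_{A,a}, Φ_{A',a'}⟩ = δ_{A,A'}δ_{a,a'} + (1−δ_{A,A'})/d. Let s : Fin (d·d') → Fin k → Fin d be any function. Then the following are equivalent: (i) there exists an orthonormal basis (e_I)_{I ∈ Fin (d·d')} of EuclideanSpace ℂ (Fin d' × Fin d) such that ⟨e_I, Φ_{A,a}⟩ = 0 whenever s(I)(A) ≠ a; (ii) there exists a matrix H : Matrix (Fin (d·d')) (Fin k × Fin d) ℂ such that H(I,(A,a)) = 0 whenever s(I)(A) ≠ a, and (Hᴴ · H)((A,a),(A',a')) = δ_{A,A'}δ_{a,a'} + (1−δ_{A,A'})/d for all A, A', a, a'. -/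
/-!
If `e` is an orthonormal basis and `H I p = ⟪e I, Φ p⟫`, Parseval's identity says that `Hᴴ * H` is
the Gram matrix of `Φ`, so the survival condition on `e` becomes the support condition on `H`.
Conversely, if `Hᴴ * H` is the Gram matrix of `Φ`, the columns of `H` (read in some orthonormal
basis) and the vectors `Φ p` have the same Gram matrix. The map `∑ xₚ colₚ ↦ ∑ xₚ Φₚ` is then a
well-defined isometry on the span of the columns, which extends to a unitary `U` of the whole
space, and `U` carries the basis to one whose coordinates of `Φ` are the entries of `H`.
-/

open scoped InnerProductSpace
open Matrix

section GramIsometry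

variable {𝕜 ι V : Type*} [RCLike 𝕜] [Fintype ι]
  [NormedAddCommGroup V] [InnerProductSpace 𝕜 V] {v w : ι → V}

lemma inner_linearCombination_eq_of_inner_eq (h : ∀ i j, ⟪v i, v j⟫_𝕜 = ⟪w i, w j⟫_𝕜)
    (x y : ι → 𝕜) :
    ⟪Fintype.linearCombination 𝕜 v x, Fintype.linearCombination 𝕜 v y⟫_𝕜 =
      ⟪Fintype.linearCombination 𝕜 w x, Fintype.linearCombination 𝕜 w y⟫_𝕜 := by
  simp only [Fintype.linearCombination_apply, sum_inner, inner_sum, inner_smul_left,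
    inner_smul_right, h]

lemma ker_linearCombination_le_of_inner_eq (h : ∀ i j, ⟪v i, v j⟫_𝕜 = ⟪w i, w j⟫_𝕜) :
    LinearMap.ker (Fintype.linearCombination 𝕜 v) ≤
      LinearMap.ker (Fintype.linearCombination 𝕜 w) := by
  intro x hx
  rw [LinearMap.mem_ker] at hx ⊢
  rw [← inner_self_eq_zero (𝕜 := 𝕜), ← inner_linearCombination_eq_of_inner_eq h, hx,
    inner_zero_left]

lemma exists_linearIsometry_range_linearCombination (h : ∀ i j, ⟪v i, v j⟫_𝕜 = ⟪w i, w j⟫_𝕜) :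
    ∃ J : LinearMap.range (Fintype.linearCombination 𝕜 v) →ₗᵢ[𝕜] V,
      ∀ x, J ⟨_, LinearMap.mem_range_self _ x⟩ = Fintype.linearCombination 𝕜 w x := by
  set L := Fintype.linearCombination 𝕜 v
  let f : LinearMap.range L →ₗ[𝕜] V :=
    (LinearMap.ker L).liftQ _ (ker_linearCombination_le_of_inner_eq h) ∘ₗ
      (LinearMap.quotKerEquivRange L).symm.toLinearMap
  have hf : ∀ x, f ⟨L x, LinearMap.mem_range_self L x⟩ = Fintype.linearCombination 𝕜 w x :=
    fun x => by simp [f, LinearMap.quotKerEquivRange_symm_apply_image]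
  have hinner : ∀ u u' : LinearMap.range L, ⟪f u, f u'⟫_𝕜 = ⟪u, u'⟫_𝕜 := by
    rintro ⟨-, x, rfl⟩ ⟨-, y, rfl⟩
    rw [hf, hf, Submodule.coe_inner, inner_linearCombination_eq_of_inner_eq h]
  exact ⟨f.isometryOfInner hinner, hf⟩

lemma exists_linearIsometryEquiv_of_inner_eq [FiniteDimensional 𝕜 V]
    (h : ∀ i j, ⟪v i, v j⟫_𝕜 = ⟪w i, w j⟫_𝕜) :
    ∃ U : V ≃ₗᵢ[𝕜] V, ∀ i, U (v i) = w i := by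
  classical
  obtain ⟨J, hJ⟩ := exists_linearIsometry_range_linearCombination h
  refine ⟨J.extend.toLinearIsometryEquiv rfl, fun i => ?_⟩
  have hJi := J.extend_apply ⟨_, LinearMap.mem_range_self _ (Pi.single i 1)⟩
  rw [hJ] at hJi
  simpa [Fintype.linearCombination_apply_single] using hJi

end GramIsometry

section OrthonormalBasis

variable {𝕜 ι κ V : Type*} [RCLike 𝕜] [Fintype ι] [Fintype κ]
  [NormedAddCommGroup V] [InnerProductSpace 𝕜 V] [FiniteDimensional 𝕜 V]

theorem exists_orthonormalBasis_inner_eq_iff_gram_eq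
    (hcard : Module.finrank 𝕜 V = Fintype.card ι) (H : Matrix ι κ 𝕜) (Φ : κ → V) :
    (∃ e : OrthonormalBasis ι 𝕜 V, ∀ I p, ⟪e I, Φ p⟫_𝕜 = H I p) ↔ gram 𝕜 Φ = Hᴴ * H := by
  constructor
  · rintro ⟨e, he⟩
    have hH : H = of fun I p => e.repr (Φ p) I := by
      ext I p
      simp [e.repr_apply_apply, he]
    rw [hH]
    exact gram_eq_conjTranspose_mul e Φ
  · intro hgram
    let b : OrthonormalBasis ι 𝕜 V :=
      (stdOrthonormalBasis 𝕜 V).reindex (Fintype.equivFinOfCardEq hcard.symm).symm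
    let c : κ → V := fun p => b.repr.symm (WithLp.toLp 2 fun I => H I p)
    have hc : ∀ p q, ⟪c p, c q⟫_𝕜 = ⟪Φ p, Φ q⟫_𝕜 := by
      intro p q
      rw [← gram_apply (𝕜 := 𝕜) Φ, hgram, LinearIsometryEquiv.inner_map_map, mul_apply]
      simp [PiLp.inner_apply, mul_comm]
    obtain ⟨U, hU⟩ := exists_linearIsometryEquiv_of_inner_eq hc
    refine ⟨b.map U, fun I p => ?_⟩
    rw [OrthonormalBasis.map_apply, ← hU, LinearIsometryEquiv.inner_map_map,
      ← b.repr_apply_apply]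
    simp [c]

end OrthonormalBasis

theorem mean_king_criterion_general
    (d d' k : ℕ)
    (Φ : Fin k → Fin d → EuclideanSpace ℂ (Fin d' × Fin d))
    (hGram : ∀ (A A' : Fin k) (a a' : Fin d),
      ⟪Φ A a, Φ A' a'⟫_ℂ =
        if A = A' then (if a = a' then 1 else 0) else 1 / (d : ℂ))
    (s : Fin (d * d') → Fin k → Fin d) :
    (∃ e : OrthonormalBasis (Fin (d * d')) ℂ (EuclideanSpace ℂ (Fin d' × Fin d)),
        ∀ (I : Fin (d * d')) (A : Fin k) (a : Fin d),
          s I A ≠ a → ⟪e I, Φ A a⟫_ℂ = 0) ↔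
    (∃ H : Matrix (Fin (d * d')) (Fin k × Fin d) ℂ,
        (∀ (I : Fin (d * d')) (A : Fin k) (a : Fin d),
          s I A ≠ a → H I (A, a) = 0) ∧
        (∀ (A A' : Fin k) (a a' : Fin d),
          (Hᴴ * H) (A, a) (A', a') =
            if A = A' then (if a = a' then 1 else 0) else 1 / (d : ℂ))) := by
  have hcard : Module.finrank ℂ (EuclideanSpace ℂ (Fin d' × Fin d)) =
      Fintype.card (Fin (d * d')) := by
    simp [mul_comm]
  have criterion := exists_orthonormalBasis_inner_eq_iff_gram_eq (κ := Fin k × Fin d) hcard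
  constructor
  · rintro ⟨e, he⟩
    let H : Matrix (Fin (d * d')) (Fin k × Fin d) ℂ := of fun I p => ⟪e I, Φ p.1 p.2⟫_ℂ
    have hH := (criterion H fun p => Φ p.1 p.2).mp ⟨e, fun _ _ => rfl⟩
    refine ⟨H, he, fun A A' a a' => ?_⟩
    rw [← hH, gram_apply, hGram]
  · rintro ⟨H, hH, hHG⟩
    obtain ⟨e, he⟩ := (criterion H fun p => Φ p.1 p.2).mpr <| by
      ext ⟨A, a⟩ ⟨A', a'⟩
      rw [gram_apply, hGram, hHG]
    exact ⟨e, fun I A a hne => (he I (A, a)).trans (hH I A a hne)⟩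

/-- **Criterion for a solution to the Mean King's problem (Theorem 1 of the paper).**
A solution (an orthonormal basis satisfying the survival condition for the estimation
function `s`) exists if and only if there is a matrix `H` vanishing where `s` predicts
a different outcome and whose Gram matrix `Hᴴ * H` is the MUB Gram matrix. -/
theorem mean_king_criterion
    (d d' k : ℕ) (hd : 1 ≤ d) (hdd' : d ≤ d') (hk : 1 ≤ k)
    (Φ : Fin k → Fin d → EuclideanSpace ℂ (Fin d' × Fin d))
    (hGram : ∀ (A A' : Fin k) (a a' : Fin d),
      ⟪Φ A a, Φ A' a'⟫_ℂ =
        if A = A' then (if a = a' then 1 else 0) else 1 / (d : ℂ))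
    (s : Fin (d * d') → Fin k → Fin d) :
    (∃ e : OrthonormalBasis (Fin (d * d')) ℂ (EuclideanSpace ℂ (Fin d' × Fin d)),
        ∀ (I : Fin (d * d')) (A : Fin k) (a : Fin d),
          s I A ≠ a → ⟪e I, Φ A a⟫_ℂ = 0) ↔
    (∃ H : Matrix (Fin (d * d')) (Fin k × Fin d) ℂ,
        (∀ (I : Fin (d * d')) (A : Fin k) (a : Fin d),
          s I A ≠ a → H I (A, a) = 0) ∧
        (∀ (A A' : Fin k) (a a' : Fin d),
          (Hᴴ * H) (A, a) (A', a') =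
            if A = A' then (if a = a' then 1 else 0) else 1 / (d : ℂ))) :=
  mean_king_criterion_general d d' k Φ hGram s
end

section
/- Let V be a finite-dimensional complex inner product space with dim V = N, let v : Fin m → V be a family of vectors, and let H : Matrix (Fin N) (Fin m) ℂ be a matrix such that (Hᴴ · H)(j, j') = ⟨v_j, v_{j'}⟩ for all j, j' ∈ Fin m. Then there exists an orthonormal basis (e_I)_{I ∈ Fin N} of V such that ⟨e_I, v_j⟩ = H(I, j) for all I ∈ Fin N and j ∈ Fin m. -/
/-!
Two families with the same Gram matrix differ by a unitary: `∑ xᵢ • vᵢ ↦ ∑ xᵢ • wᵢ` is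
well defined and isometric on the span of `v`, and extends to all of the space. Apply this to
`v` and to the vectors whose coordinates in a fixed orthonormal basis `b` are the columns of `H`
(their Gram matrix is `Hᴴ * H`); the image of `b` under that unitary is the required basis.
-/

open scoped InnerProductSpace
open Matrix

theorem LinearIsometry.exists_linearIsometryEquiv_extension {𝕜 E : Type*} [RCLike 𝕜]
    [NormedAddCommGroup E] [InnerProductSpace 𝕜 E] [FiniteDimensional 𝕜 E]
    {S : Submodule 𝕜 E} (L : S →ₗᵢ[𝕜] E) :
    ∃ U : E ≃ₗᵢ[𝕜] E, ∀ s : S, U s = L s :=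
  ⟨L.extend.toLinearIsometryEquiv rfl, L.extend_apply⟩

theorem LinearMap.exists_linearIsometry_range_of_norm_eq {𝕜 D E F : Type*} [NormedField 𝕜]
    [AddCommGroup D] [Module 𝕜 D] [SeminormedAddCommGroup E] [NormedSpace 𝕜 E]
    [NormedAddCommGroup F] [NormedSpace 𝕜 F] (A : D →ₗ[𝕜] E) (B : D →ₗ[𝕜] F)
    (hAB : ∀ x, ‖A x‖ = ‖B x‖) :
    ∃ L : range A →ₗᵢ[𝕜] F, ∀ x, L (A.rangeRestrict x) = B x := by
  obtain ⟨s, hs⟩ := A.rangeRestrict.exists_rightInverse_of_surjective A.range_rangeRestrict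
  have hAs (y : range A) : A (s y) = y := congr_arg Subtype.val (LinearMap.congr_fun hs y)
  refine ⟨⟨B ∘ₗ s, fun y => by simp [← hAB, hAs]⟩, fun x => ?_⟩
  change B (s (A.rangeRestrict x)) = B x
  rw [← sub_eq_zero, ← map_sub, ← norm_eq_zero, ← hAB, map_sub, hAs]
  simp

theorem exists_linearIsometryEquiv_of_gram_eq {𝕜 E ι : Type*} [RCLike 𝕜]
    [NormedAddCommGroup E] [InnerProductSpace 𝕜 E] [FiniteDimensional 𝕜 E] [Fintype ι]
    {v w : ι → E} (hvw : gram 𝕜 v = gram 𝕜 w) :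
    ∃ U : E ≃ₗᵢ[𝕜] E, ∀ i, U (v i) = w i := by
  classical
  let A := Fintype.linearCombination 𝕜 v
  let B := Fintype.linearCombination 𝕜 w
  have hAB (x : ι → 𝕜) : ‖A x‖ = ‖B x‖ := by
    simp only [A, B, Fintype.linearCombination_apply, norm_eq_sqrt_re_inner (𝕜 := 𝕜),
      ← star_dotProduct_gram_mulVec, hvw]
  obtain ⟨L, hL⟩ := A.exists_linearIsometry_range_of_norm_eq B hAB
  obtain ⟨U, hU⟩ := L.exists_linearIsometryEquiv_extension
  refine ⟨U, fun i => ?_⟩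
  simpa [A, B] using (hU (A.rangeRestrict (Pi.single i 1))).trans (hL _)

/-- **Key linear-algebra lemma.** If a matrix `H` has `Hᴴ * H` equal to the Gram
matrix of a family of vectors `v` in an `N`-dimensional complex inner product space,
then there is an orthonormal basis `e` with `⟪e I, v j⟫ = H I j`. -/
theorem exists_orthonormalBasis_of_gram_eq
    (N m : ℕ) (V : Type*) [NormedAddCommGroup V] [InnerProductSpace ℂ V]
    [FiniteDimensional ℂ V] (hN : Module.finrank ℂ V = N)
    (v : Fin m → V) (H : Matrix (Fin N) (Fin m) ℂ)
    (hGram : ∀ j j' : Fin m, (Hᴴ * H) j j' = ⟪v j, v j'⟫_ℂ) :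
    ∃ e : OrthonormalBasis (Fin N) ℂ V,
      ∀ (I : Fin N) (j : Fin m), ⟪e I, v j⟫_ℂ = H I j := by
  let b : OrthonormalBasis (Fin N) ℂ V := (stdOrthonormalBasis ℂ V).reindex (finCongr hN)
  let h : Fin m → V := fun j => b.repr.symm (WithLp.toLp 2 fun I => H I j)
  have hgram : gram ℂ h = gram ℂ v := by
    rw [gram_eq_conjTranspose_mul b]
    ext j j'
    simp only [h, LinearIsometryEquiv.apply_symm_apply, gram_apply]
    exact hGram j j'
  obtain ⟨U, hU⟩ := exists_linearIsometryEquiv_of_gram_eq hgram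
  refine ⟨b.map U, fun I j => ?_⟩
  rw [b.map_apply, ← hU, U.inner_map_map, ← b.repr_apply_apply]
  simp [h]
end

section
/- Let d ≥ 1, k ≥ 1, let V be a complex inner product space, and let Φ_{A,a} (A ∈ Fin k, a ∈ Fin d) be vectors in V satisfying the MUB Gram condition ⟨Φ_{A,a}, Φ_{A',a'}⟩ = δ_{A,A'}δ_{a,a'} + (1−δ_{A,A'})/d. Let ω = exp(2πi/d) and define Φ̂_{A,j} = (1/√d)·Σ_{a=0}^{d-1} ω^{a·j}·Φ_{A,a} for A ∈ Fin k and j ∈ Fin d. Then ⟨Φ̂_{A,j}, Φ̂_{A',j'}⟩ = δ_{A,A'}δ_{j,j'} + (1−δ_{A,A'})δ_{j,0}δ_{j',0} for all A, A' ∈ Fin k and j, j' ∈ Fin d. -/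
/-!
For a primitive `d`-th root of unity `ω`, the characters `a ↦ ω ^ (a * j)` are orthogonal on
`Fin d` with squared norm `d`; together with the orthonormality of each block this settles the case
`A = A'`. For `A ≠ A'` every Gram entry equals `1 / d`, so the inner product factors as
`conj (∑ a, ω ^ (a * j)) * ∑ a, ω ^ (a * j') / d ^ 2`, and `∑ a, ω ^ (a * j) = d` if `j = 0` and
vanishes otherwise.
-/

open scoped InnerProductSpace ComplexConjugate
open Finset

theorem sum_range_pow_eq_ite_of_pow_eq_one {K : Type*} [Field K] [DecidableEq K] {ζ : K} {n : ℕ}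
    (h : ζ ^ n = 1) : ∑ i ∈ range n, ζ ^ i = if ζ = 1 then (n : K) else 0 := by
  split_ifs with hζ
  · simp [hζ]
  · rw [geom_sum_eq hζ, h, sub_self, zero_div]

namespace IsPrimitiveRoot

variable {ω : ℂ} {d : ℕ}

theorem sum_pow_mul_eq_ite (hω : IsPrimitiveRoot ω d) (j : Fin d) :
    ∑ a : Fin d, ω ^ ((a : ℕ) * j) = if (j : ℕ) = 0 then (d : ℂ) else 0 := by
  have hj : (ω ^ (j : ℕ)) ^ d = 1 := by rw [pow_right_comm, hω.pow_eq_one, one_pow]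
  simp_rw [mul_comm _ (j : ℕ), pow_mul]
  rw [Fin.sum_univ_eq_sum_range (fun a => (ω ^ (j : ℕ)) ^ a),
    sum_range_pow_eq_ite_of_pow_eq_one hj]
  simp only [hω.pow_eq_one_iff_dvd, Nat.dvd_iff_mod_eq_zero, Nat.mod_eq_of_lt j.isLt]

theorem sum_conj_pow_mul_pow_eq_ite (hω : IsPrimitiveRoot ω d) (j j' : Fin d) :
    ∑ a : Fin d, conj (ω ^ ((a : ℕ) * j)) * ω ^ ((a : ℕ) * j') =
      if j = j' then (d : ℂ) else 0 := by
  have hconj : conj ω = ω⁻¹ := (Complex.inv_eq_conj (hω.norm'_eq_one j.pos.ne')).symm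
  set ζ := (ω ^ (j : ℕ))⁻¹ * ω ^ (j' : ℕ)
  have hpow : ∀ i : ℕ, (ω ^ i) ^ d = 1 := fun i => by
    rw [pow_right_comm, hω.pow_eq_one, one_pow]
  have hζ : ζ ^ d = 1 := by rw [mul_pow, inv_pow, hpow, hpow, inv_one, one_mul]
  have hterm : ∀ a : ℕ, conj (ω ^ (a * j)) * ω ^ (a * j') = ζ ^ a := fun a => by
    rw [map_pow, hconj, inv_pow, mul_pow, inv_pow, ← pow_mul, ← pow_mul, mul_comm (j : ℕ),
      mul_comm (j' : ℕ)]
  have hζ_one : ζ = 1 ↔ j = j' := by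
    rw [inv_mul_eq_one₀ (pow_ne_zero _ (hω.ne_zero j.pos.ne')), Fin.ext_iff]
    exact ⟨fun h => hω.pow_inj j.isLt j'.isLt h, fun h => h ▸ rfl⟩
  simp_rw [hterm]
  rw [Fin.sum_univ_eq_sum_range (ζ ^ ·), sum_range_pow_eq_ite_of_pow_eq_one hζ]
  simp only [hζ_one]

end IsPrimitiveRoot

theorem inner_sum_smul_sum_smul {𝕜 E ι ι' : Type*} [RCLike 𝕜] [SeminormedAddCommGroup E]
    [InnerProductSpace 𝕜 E] (s : Finset ι) (s' : Finset ι') (c : ι → 𝕜) (c' : ι' → 𝕜)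
    (x : ι → E) (y : ι' → E) :
    ⟪∑ i ∈ s, c i • x i, ∑ i' ∈ s', c' i' • y i'⟫_𝕜 =
      ∑ i ∈ s, ∑ i' ∈ s', conj (c i) * c' i' * ⟪x i, y i'⟫_𝕜 := by
  simp_rw [sum_inner, inner_sum, inner_smul_left, inner_smul_right, mul_assoc]

theorem fourier_transformed_states_orthogonality_general
    (d k : ℕ)
    (V : Type*) [NormedAddCommGroup V] [InnerProductSpace ℂ V]
    (Φ : Fin k → Fin d → V)
    (hGram : ∀ (A A' : Fin k) (a a' : Fin d),
      ⟪Φ A a, Φ A' a'⟫_ℂ =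
        if A = A' then (if a = a' then 1 else 0) else 1 / (d : ℂ))
    (ω : ℂ) (hω : ω = Complex.exp (2 * Real.pi * Complex.I / d))
    (Φhat : Fin k → Fin d → V)
    (hΦhat : ∀ (A : Fin k) (j : Fin d),
      Φhat A j = (1 / Real.sqrt d : ℂ) • ∑ a : Fin d, ω ^ ((a : ℕ) * (j : ℕ)) • Φ A a) :
    ∀ (A A' : Fin k) (j j' : Fin d),
      ⟪Φhat A j, Φhat A' j'⟫_ℂ =
        if A = A' then (if j = j' then 1 else 0)
        else (if (j : ℕ) = 0 ∧ (j' : ℕ) = 0 then 1 else 0) := by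
  intro A A' j j'
  have hd : (d : ℂ) ≠ 0 := Nat.cast_ne_zero.mpr j.pos.ne'
  have hprim : IsPrimitiveRoot ω d := hω ▸ Complex.isPrimitiveRoot_exp d j.pos.ne'
  have hscale : conj (1 / Real.sqrt d : ℂ) * (1 / Real.sqrt d : ℂ) = 1 / d := by
    rw [← Complex.ofReal_one, ← Complex.ofReal_div, Complex.conj_ofReal, ← Complex.ofReal_mul,
      div_mul_div_comm, one_mul, Real.mul_self_sqrt d.cast_nonneg]
    norm_cast
  rw [hΦhat, hΦhat, inner_smul_left, inner_smul_right, inner_sum_smul_sum_smul, ← mul_assoc,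
    hscale]
  simp_rw [hGram]
  by_cases hA : A = A'
  · subst hA
    simp only [if_true, mul_ite, mul_one, mul_zero, sum_ite_eq, mem_univ,
      hprim.sum_conj_pow_mul_pow_eq_ite]
    split_ifs <;> simp [hd]
  · simp only [hA, if_false]
    simp_rw [← sum_mul, ← mul_sum, ← sum_mul, ← map_sum, hprim.sum_pow_mul_eq_ite]
    split_ifs <;> simp_all

/-- **Orthogonality relation (Eq. (4) of the paper).** For vectors `Φ_{A,a}` with the
MUB Gram matrix, the Fourier-transformed vectors
`Φ̂_{A,j} = (1/√d)·Σ_a ω^{aj}·Φ_{A,a}` (with `ω = exp(2πi/d)`) satisfy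
`⟪Φ̂_{A,j}, Φ̂_{A',j'}⟫ = δ_{A,A'}δ_{j,j'} + (1-δ_{A,A'})δ_{j,0}δ_{j',0}`. -/
theorem fourier_transformed_states_orthogonality
    (d k : ℕ) (hd : 1 ≤ d) (hk : 1 ≤ k)
    (V : Type*) [NormedAddCommGroup V] [InnerProductSpace ℂ V]
    (Φ : Fin k → Fin d → V)
    (hGram : ∀ (A A' : Fin k) (a a' : Fin d),
      ⟪Φ A a, Φ A' a'⟫_ℂ =
        if A = A' then (if a = a' then 1 else 0) else 1 / (d : ℂ))
    (ω : ℂ) (hω : ω = Complex.exp (2 * Real.pi * Complex.I / d))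
    (Φhat : Fin k → Fin d → V)
    (hΦhat : ∀ (A : Fin k) (j : Fin d),
      Φhat A j = (1 / Real.sqrt d : ℂ) • ∑ a : Fin d, ω ^ ((a : ℕ) * (j : ℕ)) • Φ A a) :
    ∀ (A A' : Fin k) (j j' : Fin d),
      ⟪Φhat A j, Φhat A' j'⟫_ℂ =
        if A = A' then (if j = j' then 1 else 0)
        else (if (j : ℕ) = 0 ∧ (j' : ℕ) = 0 then 1 else 0) :=
  fourier_transformed_states_orthogonality_general d k V Φ hGram ω hω Φhat hΦhat
end

section
/- Let d ≥ 1, k ≥ 1, let V be a complex inner product space, let Φ_{A,a} (A ∈ Fin k, a ∈ Fin d) be vectors in V satisfying the MUB Gram condition ⟨Φ_{A,a}, Φ_{A',a'}⟩ = δ_{A,A'}δ_{a,a'} + (1−δ_{A,A'})/d, and set Φ = (1/√d)·Σ_{a=0}^{d-1} Φ_{0,a}. Then: (i) (1/√d)·Σ_{a=0}^{d-1} Φ_{A,a} = Φ for every A ∈ Fin k; and (ii) for distinct A, A' ∈ Fin k, every vector in the orthogonal complement of ℂ·Φ inside span{Φ_{A,a} : a ∈ Fin d} is orthogonal to every vector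 in the orthogonal complement of ℂ·Φ inside span{Φ_{A',a} : a ∈ Fin d}. That is, span{Φ_{A,a} : all A, a} decomposes as the orthogonal direct sum of ℂ·Φ and the k mutually orthogonal subspaces 𝒜_A. -/
open scoped InnerProductSpace

/-- **Orthogonal decomposition of the span of the post-measurement states.**
With `Φ = (1/√d)·Σ_a Φ_{0,a}`: (i) `(1/√d)·Σ_a Φ_{A,a} = Φ` for every `A`; and
(ii) for `A ≠ A'`, the orthogonal complement of `ℂ·Φ` inside `span{Φ_{A,a}}_a` is
orthogonal to the orthogonal complement of `ℂ·Φ` inside `span{Φ_{A',a}}_a`. -/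
theorem span_decomposition_of_mub_gram
    (d k : ℕ) (hd : 1 ≤ d) (hk : 1 ≤ k)
    (V : Type*) [NormedAddCommGroup V] [InnerProductSpace ℂ V]
    (Φ : Fin k → Fin d → V)
    (hGram : ∀ (A A' : Fin k) (a a' : Fin d),
      ⟪Φ A a, Φ A' a'⟫_ℂ =
        if A = A' then (if a = a' then 1 else 0) else 1 / (d : ℂ))
    (Φ₀ : V) (hΦ₀ : Φ₀ = (1 / Real.sqrt d : ℂ) • ∑ a : Fin d, Φ ⟨0, hk⟩ a) :
    (∀ A : Fin k, (1 / Real.sqrt d : ℂ) • ∑ a : Fin d, Φ A a = Φ₀) ∧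
    (∀ A A' : Fin k, A ≠ A' →
      ∀ x ∈ Submodule.span ℂ (Set.range (Φ A)) ⊓ (ℂ ∙ Φ₀)ᗮ,
      ∀ y ∈ Submodule.span ℂ (Set.range (Φ A')) ⊓ (ℂ ∙ Φ₀)ᗮ,
        ⟪x, y⟫_ℂ = 0) := by
  have hd0 : (d : ℂ) ≠ 0 := Nat.cast_ne_zero.mpr (by omega)
  have hsR : Real.sqrt d ≠ 0 := by positivity
  have hs0 : ((Real.sqrt d : ℝ) : ℂ) ≠ 0 := by exact_mod_cast hsR
  have hs : ((Real.sqrt d : ℝ) : ℂ) * ((Real.sqrt d : ℝ) : ℂ) = (d : ℂ) := by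
    rw [← Complex.ofReal_mul, Real.mul_self_sqrt (by positivity)]
    norm_cast
  have hsum : ∀ A B : Fin k, ⟪∑ a : Fin d, Φ A a, ∑ a : Fin d, Φ B a⟫_ℂ = (d : ℂ) := by
    intro A B
    rw [sum_inner]
    simp_rw [inner_sum, hGram]
    by_cases h : A = B
    · subst h
      simp
    · simp only [h, if_false, Finset.sum_const, Finset.card_univ, Fintype.card_fin,
        nsmul_eq_mul]
      field_simp
  have hSum : ∀ A : Fin k, (∑ a : Fin d, Φ A a) = ∑ a : Fin d, Φ ⟨0, hk⟩ a := by
    intro A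
    have h0 : ⟪(∑ a : Fin d, Φ A a) - ∑ a : Fin d, Φ ⟨0, hk⟩ a,
        (∑ a : Fin d, Φ A a) - ∑ a : Fin d, Φ ⟨0, hk⟩ a⟫_ℂ = 0 := by
      rw [inner_sub_left, inner_sub_right, inner_sub_right, hsum, hsum, hsum, hsum]
      ring
    rw [inner_self_eq_zero] at h0
    exact sub_eq_zero.mp h0
  have part1 : ∀ A : Fin k, (1 / Real.sqrt d : ℂ) • ∑ a : Fin d, Φ A a = Φ₀ := by
    intro A; rw [hΦ₀, hSum A]
  refine ⟨part1, ?_⟩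
  intro A A' hne x hx y hy
  -- x is orthogonal to Φ₀
  have hxΦ₀ : ⟪x, Φ₀⟫_ℂ = 0 := by
    rw [inner_eq_zero_symm]
    exact hx.2 Φ₀ (Submodule.mem_span_singleton_self Φ₀)
  -- key : inner of x with each Φ A' a is proportional to ⟪x, Φ₀⟫
  have key : ∀ a : Fin d, ⟪x, Φ A' a⟫_ℂ = 0 := by
    intro a
    have hmem := hx.1
    have claim : ∀ z ∈ Submodule.span ℂ (Set.range (Φ A)),
        ⟪z, Φ A' a⟫_ℂ = ((Real.sqrt d : ℝ) : ℂ)⁻¹ * ⟪z, Φ₀⟫_ℂ := by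
      intro z hz
      induction hz using Submodule.span_induction with
      | mem v hv =>
        obtain ⟨j, rfl⟩ := hv
        have hΦ₀' : Φ₀ = (1 / Real.sqrt d : ℂ) • ∑ b : Fin d, Φ A' b :=
          (part1 A').symm
        rw [hΦ₀', inner_smul_right, inner_sum]
        simp_rw [hGram]
        simp only [hne, if_false, Finset.sum_const, Finset.card_univ, Fintype.card_fin,
          nsmul_eq_mul]
        field_simp
        linear_combination hs
      | zero => simp
      | add u w _ _ hu hw => rw [inner_add_left, inner_add_left, hu, hw]; ring
      | smul c u _ hu => rw [inner_smul_left, inner_smul_left, hu]; ring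
    rw [claim x hmem, hxΦ₀, mul_zero]
  -- conclude by span induction on y
  have final : ∀ z ∈ Submodule.span ℂ (Set.range (Φ A')), ⟪x, z⟫_ℂ = 0 := by
    intro z hz
    induction hz using Submodule.span_induction with
    | mem v hv => obtain ⟨j, rfl⟩ := hv; exact key j
    | zero => simp
    | add u w _ _ hu hw => rw [inner_add_right, hu, hw, add_zero]
    | smul c u _ hu => rw [inner_smul_right, hu, mul_zero]
  exact final y hy.1
end

section
/- Let d ≥ 1 and k ≥ 1, and let G : Matrix (Fin k × Fin d) (Fin k × Fin d) ℂ be the matrix defined by G((A,a),(A',a')) = δ_{A,A'}δ_{a,a'} + (1−δ_{A,A'})/d (i.e. G((A,a),(A',a')) equals 1 if A = A' and a = a', equals 0 if A = A' and a ≠ a', and equals 1/d if A ≠ A'). Then the rank of G equals k·(d−1) + 1. -/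
open Matrix


open Matrix

namespace MubAux

variable (l m : ℕ)

noncomputable def dlt (m : ℕ) : ℂ := ((m:ℂ)+1)⁻¹

abbrev RI (l m : ℕ) := (Fin (l+1) × Fin m) ⊕ Unit
abbrev II (l m : ℕ) := Fin (l+1) × Fin (m+1)

noncomputable def Umat : Matrix (II l m) (RI l m) ℂ :=
  fun p c => match c with
  | .inl (A, b) => if A = p.1 then (if p.2 = b.succ then 1 else 0) - dlt m else 0
  | .inr _ => dlt m

noncomputable def Vmat : Matrix (RI l m) (II l m) ℂ :=
  fun c q => match c with
  | .inl (A, b) => if A = q.1 then (if q.2 = b.succ then 1 else 0) - (if q.2 = 0 then 1 else 0) else 0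
  | .inr _ => 1

lemma hdm : ((m:ℂ)+1) ≠ 0 := by
  intro h
  have := congrArg Complex.re h
  simp at this
  have : (0:ℝ) ≤ (m:ℝ) := Nat.cast_nonneg m
  linarith [congrArg Complex.re h, this]

lemma mul_UV (G : Matrix (II l m) (II l m) ℂ)
    (hG : ∀ p q, G p q = if p.1 = q.1 then (if p.2 = q.2 then 1 else 0) else dlt m) :
    Umat l m * Vmat l m = G := by
  ext p q
  rw [mul_apply, Fintype.sum_sum_type, hG]
  simp only [Umat, Vmat, Fintype.sum_prod_type]
  rw [Finset.sum_comm]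
  simp only [ite_mul, zero_mul, Finset.sum_ite_eq', Finset.mem_univ, if_true]
  rcases eq_or_ne p.1 q.1 with h1 | h1
  · simp only [h1, eq_self_iff_true, if_true]
    simp only [Finset.sum_const, Finset.card_univ, Fintype.card_unit, one_smul, mul_one]
    have key : (∑ x : Fin m, ((if p.2 = x.succ then (1:ℂ) else 0) - dlt m) *
          ((if q.2 = x.succ then (1:ℂ) else 0) - (if q.2 = 0 then 1 else 0)))
        = (∑ y : Fin (m+1), ((if p.2 = y then (1:ℂ) else 0) - dlt m) *
            ((if q.2 = y then (1:ℂ) else 0) - (if q.2 = 0 then 1 else 0)))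
          - ((if p.2 = 0 then (1:ℂ) else 0) - dlt m) *
            ((if q.2 = 0 then (1:ℂ) else 0) - (if q.2 = 0 then 1 else 0)) := by
      rw [Fin.sum_univ_succ]; ring
    rw [key]
    simp only [sub_self, mul_zero, sub_zero, mul_sub, sub_mul, Finset.sum_sub_distrib,
      ite_mul, mul_ite, mul_one, mul_zero, one_mul, zero_mul,
      Finset.sum_ite_eq, Finset.sum_ite_eq', Finset.mem_univ, if_true,
      Finset.sum_const, Finset.card_univ, Fintype.card_fin, nsmul_eq_mul]
    have hd := hdm m
    split_ifs <;> simp [dlt] <;> field_simp <;> ring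
  · simp [h1]


noncomputable def Smat : Matrix (RI l m) (RI l m) ℂ :=
  Matrix.diagonal (fun c => match c with | .inl _ => 1 | .inr _ => (l:ℂ)+1)

noncomputable def Tmat : Matrix (RI l m) (RI l m) ℂ :=
  fun c c' => match c, c' with
  | .inl (A, b), .inl (A', b') => if A = A' then (if b = b' then 1 else 0) + 1 else 0
  | .inl _, .inr _ => 0
  | .inr _, .inl _ => 0
  | .inr _, .inr _ => ((l:ℂ)+1)*((m:ℂ)+1)

noncomputable def Nmat : Matrix (RI l m) (RI l m) ℂ :=
  fun c c' => match c, c' with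
  | .inl (A, b), .inl (A', b') => if A = A' then (if b = b' then 1 else 0) - dlt m else 0
  | .inl _, .inr _ => 0
  | .inr _, .inl _ => 0
  | .inr _, .inr _ => (((l:ℂ)+1)*((l:ℂ)+1)*((m:ℂ)+1))⁻¹

lemma mul_VVt : Vmat l m * (Vmat l m)ᵀ = Tmat l m := by
  have hd := hdm m
  ext c c'
  rw [mul_apply]
  rcases c with ⟨A, b⟩ | u <;> rcases c' with ⟨A', b'⟩ | u'
  all_goals
    simp only [Vmat, Tmat, transpose_apply, Fintype.sum_prod_type, ite_mul, mul_ite,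
      zero_mul, mul_zero, one_mul, mul_one, sub_mul, mul_sub,
      Finset.sum_sub_distrib, Finset.sum_ite_eq, Finset.sum_ite_eq',
      Finset.mem_univ, if_true, Finset.sum_const, Finset.card_univ,
      Fintype.card_fin, nsmul_eq_mul, Fin.succ_ne_zero, Fin.succ_inj]
  · split_ifs with h1 h2 h3 <;>
      simp_all [Fin.succ_inj, Fin.succ_ne_zero, eq_comm, (Fin.succ_ne_zero _).symm] <;> ring
  · simp
  · simp
  · simp only [Fintype.card_prod, Fintype.card_fin]; push_cast; ring

lemma mul_GVt (G : Matrix (II l m) (II l m) ℂ)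
    (hG : ∀ p q, G p q = if p.1 = q.1 then (if p.2 = q.2 then 1 else 0) else dlt m) :
    G * (Vmat l m)ᵀ = (Vmat l m)ᵀ * Smat l m := by
  have hd := hdm m
  ext p c
  rw [mul_apply, mul_apply]
  rcases c with ⟨A, b⟩ | u
  · simp only [Vmat, Smat, transpose_apply, Fintype.sum_prod_type_right, Fintype.sum_sum_type,
      hG, mul_ite, ite_mul, mul_zero, zero_mul, mul_one, one_mul, mul_sub, sub_mul,
      Finset.sum_sub_distrib, Finset.sum_ite_eq, Finset.sum_ite_eq',
      Finset.mem_univ, if_true, diagonal_apply, Finset.sum_const, Finset.card_univ,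
      Fintype.card_fin, nsmul_eq_mul]
    rcases eq_or_ne p.1 A with h | h
    · simp [h, eq_comm]
    · simp [h, Ne.symm h]
  · have key : ∀ x : Fin (l+1),
        (∑ y : Fin (m+1), if p.1 = x then (if p.2 = y then (1:ℂ) else 0) else dlt m) = 1 := by
      intro x
      rcases eq_or_ne p.1 x with h | h
      · simp [h]
      · simp only [h, if_false, Finset.sum_const, Finset.card_univ, Fintype.card_fin,
          nsmul_eq_mul, dlt]
        push_cast
        field_simp
    simp only [Vmat, Smat, transpose_apply, Fintype.sum_prod_type,
      hG, mul_one, diagonal_apply, Fintype.sum_sum_type]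
    rw [Finset.sum_congr rfl fun x _ => key x]
    simp


lemma TS_N : (Tmat l m * Smat l m) * Nmat l m = 1 := by
  have hd := hdm m
  have hl : ((l:ℂ)+1) ≠ 0 := hdm l
  ext c c'
  rw [mul_apply]
  simp only [Smat, Tmat, Nmat, mul_diagonal, Fintype.sum_sum_type, Fintype.sum_prod_type_right]
  rcases c with ⟨A, b⟩ | u <;> rcases c' with ⟨A', b'⟩ | u'
  all_goals
    simp only [ite_mul, mul_ite, zero_mul, mul_zero, one_mul, mul_one, sub_mul, mul_sub,
      add_mul, mul_add, Finset.sum_sub_distrib, Finset.sum_add_distrib,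
      Finset.sum_ite_eq, Finset.sum_ite_eq', Finset.mem_univ, if_true,
      Finset.sum_const, Finset.card_univ, Fintype.card_fin, nsmul_eq_mul,
      Matrix.one_apply, Sum.inl.injEq, Sum.inr.injEq, Prod.mk.injEq, reduceCtorEq]
  · rcases eq_or_ne A A' with h | h
    · simp only [h, if_true, eq_self_iff_true, true_and, Finset.sum_add_distrib,
        Finset.sum_ite_eq, Finset.mem_univ, Finset.sum_const, Finset.card_univ,
        Fintype.card_fin, nsmul_eq_mul, add_zero]
      split_ifs <;> simp [dlt] <;> field_simp <;> ring
    · simp [h]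
  · simp
  · simp
  · have hz := mul_ne_zero (mul_ne_zero hl hl) hd
    have hz2 : (1 + (l:ℂ)*2 + (l:ℂ)*(m:ℂ)*2 + (l:ℂ)^2 + (l:ℂ)^2*(m:ℂ) + (m:ℂ)) ≠ 0 := by
      intro h; exact hz (by linear_combination h)
    simp only [Fintype.card_unit, Nat.cast_one, one_mul]
    linear_combination mul_inv_cancel₀ hz2

theorem aux (G : Matrix (II l m) (II l m) ℂ)
    (hG : ∀ p q, G p q = if p.1 = q.1 then (if p.2 = q.2 then 1 else 0) else dlt m) :
    G.rank = (l+1) * m + 1 := by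
  have hUV := mul_UV l m G hG
  have hM : Vmat l m * G * (Vmat l m)ᵀ = Tmat l m * Smat l m := by
    rw [Matrix.mul_assoc, mul_GVt l m G hG, ← Matrix.mul_assoc, mul_VVt]
  have hcard : Fintype.card (RI l m) = (l+1) * m + 1 := by
    simp [RI]
  have hunit : IsUnit (Tmat l m * Smat l m) :=
    ⟨⟨_, Nmat l m, TS_N l m, mul_eq_one_comm.mp (TS_N l m)⟩, rfl⟩
  have hrank1 : (Tmat l m * Smat l m).rank = (l+1) * m + 1 := by
    rw [Matrix.rank_of_isUnit _ hunit, hcard]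
  apply le_antisymm
  · rw [← hUV]
    exact (Matrix.rank_mul_le_left _ _).trans
      (by simpa [hcard] using Matrix.rank_le_card_width (Umat l m))
  · rw [← hrank1, ← hM]
    exact (Matrix.rank_mul_le_left _ _).trans (Matrix.rank_mul_le_right _ _)

end MubAux


open Matrix

/-- **Rank of the MUB Gram matrix.** The `kd × kd` matrix
`G((A,a),(A',a')) = δ_{A,A'}δ_{a,a'} + (1-δ_{A,A'})/d` has rank `k(d-1) + 1`. -/
theorem rank_mub_gram_matrix
    (d k : ℕ) (hd : 1 ≤ d) (hk : 1 ≤ k)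
    (G : Matrix (Fin k × Fin d) (Fin k × Fin d) ℂ)
    (hG : ∀ (p q : Fin k × Fin d),
      G p q =
        if p.1 = q.1 then (if p.2 = q.2 then 1 else 0) else 1 / (d : ℂ)) :
    G.rank = k * (d - 1) + 1 := by
  obtain ⟨m, rfl⟩ : ∃ m, d = m + 1 := ⟨d - 1, (Nat.succ_pred_eq_of_pos hd).symm⟩
  obtain ⟨l, rfl⟩ : ∃ l, k = l + 1 := ⟨k - 1, (Nat.succ_pred_eq_of_pos hk).symm⟩
  have h := MubAux.aux l m G ?_
  · simpa using h
  · intro p q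
    rw [hG p q, MubAux.dlt, one_div]
    push_cast
    rfl
end

section
/- Let d ≥ 1, k ≥ 1, let V be a complex inner product space, and let Φ_{A,a} (A ∈ Fin k, a ∈ Fin d) be vectors in V satisfying the MUB Gram condition ⟨Φ_{A,a}, Φ_{A',a'}⟩ = δ_{A,A'}δ_{a,a'} + (1−δ_{A,A'})/d. Then the dimension of the linear span of {Φ_{A,a} : A ∈ Fin k, a ∈ Fin d} equals k·(d−1) + 1. -/
/-!
All the sums `∑ a, Φ A a` coincide: by the Gram condition each has inner product `1` with every
`Φ B b`, so any two of them differ by a vector of norm zero. Hence the last vector of every basis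
is the common sum minus the other `d - 1` vectors of that basis, and the span is spanned by the
`k (d - 1)` vectors `Φ A b` with `b` not last together with the common sum. These are independent:
the differences `Φ A b - Φ A (last)` form a biorthogonal system for the former and are orthogonal
to the common sum, which is nonzero since its squared norm is `d`.
-/

open scoped InnerProductSpace

section Biorthogonal

variable {𝕜 E ι : Type*} [RCLike 𝕜] [NormedAddCommGroup E] [InnerProductSpace 𝕜 E]
  [DecidableEq ι] {v w : ι → E}

theorem linearIndependent_of_inner_eq_ite
    (h : ∀ i j, ⟪w i, v j⟫_𝕜 = if i = j then 1 else 0) : LinearIndependent 𝕜 v := by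
  refine .of_comp (LinearMap.pi fun i => innerₛₗ 𝕜 (w i)) ?_
  have hcomp : (LinearMap.pi fun i => innerₛₗ 𝕜 (w i)) ∘ v = fun j => Pi.single j 1 := by
    ext j i
    simp [h, Pi.single_apply]
  rw [hcomp]
  exact Pi.linearIndependent_single_one ι 𝕜

theorem eq_zero_of_mem_span_of_inner_eq_zero [Fintype ι]
    (h : ∀ i j, ⟪w i, v j⟫_𝕜 = if i = j then 1 else 0) {x : E}
    (hx : x ∈ Submodule.span 𝕜 (Set.range v)) (hwx : ∀ i, ⟪w i, x⟫_𝕜 = 0) : x = 0 := by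
  obtain ⟨c, rfl⟩ := (Submodule.mem_span_range_iff_exists_fun 𝕜).mp hx
  have hc : ∀ i, c i = 0 := fun i => by simpa [inner_sum, inner_smul_right, h] using hwx i
  simp [hc]

end Biorthogonal

section MUB

variable {V ι : Type*} [NormedAddCommGroup V] [InnerProductSpace ℂ V] [DecidableEq ι]

def IsMUBGram {d : ℕ} (Φ : ι → Fin d → V) : Prop :=
  ∀ A A' a a', ⟪Φ A a, Φ A' a'⟫_ℂ = if A = A' then (if a = a' then 1 else 0) else 1 / (d : ℂ)

namespace IsMUBGram

section NeZero

variable {d : ℕ} [NeZero d] {Φ : ι → Fin d → V}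

theorem inner_sum_right (hΦ : IsMUBGram Φ) (A B : ι) (a : Fin d) :
    ⟪Φ A a, ∑ b, Φ B b⟫_ℂ = 1 := by
  rw [inner_sum]
  by_cases hAB : A = B
  · simp [hΦ _ _, hAB]
  · simp [hΦ _ _, hAB, NeZero.ne d]

theorem inner_sum_sum (hΦ : IsMUBGram Φ) (A B : ι) : ⟪∑ a, Φ A a, ∑ b, Φ B b⟫_ℂ = d := by
  rw [sum_inner]
  simp [hΦ.inner_sum_right]

theorem sum_eq_sum (hΦ : IsMUBGram Φ) (A B : ι) : ∑ a, Φ A a = ∑ a, Φ B a := by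
  rw [← sub_eq_zero, ← inner_self_eq_zero (𝕜 := ℂ)]
  simp only [inner_sub_left, inner_sub_right, hΦ.inner_sum_sum]
  ring

theorem sum_ne_zero (hΦ : IsMUBGram Φ) (A : ι) : ∑ a, Φ A a ≠ 0 := fun h0 => by
  have h := hΦ.inner_sum_sum A A
  rw [h0, inner_zero_left] at h
  exact NeZero.ne d (mod_cast h.symm)

end NeZero

section ReducedFamily

variable {n : ℕ} {Φ : ι → Fin (n + 1) → V}

def reducedFamily (Φ : ι → Fin (n + 1) → V) (A₀ : ι) : Option (ι × Fin n) → V :=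
  fun o => Option.casesOn' o (∑ a, Φ A₀ a) fun p => Φ p.1 p.2.castSucc

theorem inner_sub_last_castSucc (hΦ : IsMUBGram Φ) (A B : ι) (b c : Fin n) :
    ⟪Φ A b.castSucc - Φ A (Fin.last n), Φ B c.castSucc⟫_ℂ =
      if (A, b) = (B, c) then 1 else 0 := by
  by_cases hAB : A = B
  · simp [hΦ _ _, hAB, (Fin.castSucc_ne_last c).symm]
  · simp [hΦ _ _, hAB]

theorem inner_sub_last_sum (hΦ : IsMUBGram Φ) (A B : ι) (b : Fin n) :
    ⟪Φ A b.castSucc - Φ A (Fin.last n), ∑ a, Φ B a⟫_ℂ = 0 := by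
  rw [inner_sub_left, hΦ.inner_sum_right, hΦ.inner_sum_right, sub_self]

theorem linearIndependent_reducedFamily [Fintype ι] (hΦ : IsMUBGram Φ) (A₀ : ι) :
    LinearIndependent ℂ (reducedFamily Φ A₀) := by
  have hbi : ∀ p q : ι × Fin n,
      ⟪Φ p.1 p.2.castSucc - Φ p.1 (Fin.last n), Φ q.1 q.2.castSucc⟫_ℂ =
        if p = q then 1 else 0 :=
    fun p q => hΦ.inner_sub_last_castSucc _ _ _ _
  refine (linearIndependent_of_inner_eq_ite hbi).option fun hmem => hΦ.sum_ne_zero A₀ ?_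
  exact eq_zero_of_mem_span_of_inner_eq_zero hbi hmem fun p => hΦ.inner_sub_last_sum _ _ _

theorem span_range_reducedFamily (hΦ : IsMUBGram Φ) (A₀ : ι) :
    Submodule.span ℂ (Set.range (reducedFamily Φ A₀)) =
      Submodule.span ℂ (Set.range fun p : ι × Fin (n + 1) => Φ p.1 p.2) := by
  refine Submodule.span_eq_span (Set.range_subset_iff.2 ?_) (Set.range_subset_iff.2 ?_)
  · rintro (_ | ⟨A, b⟩)
    · simp only [reducedFamily, Option.casesOn'_none, SetLike.mem_coe]
      exact Submodule.sum_mem _ fun a _ => Submodule.subset_span ⟨(A₀, a), rfl⟩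
    · exact Submodule.subset_span ⟨(A, b.castSucc), rfl⟩
  · rintro ⟨A, a⟩
    have hmem : ∀ b : Fin n, Φ A b.castSucc ∈ Submodule.span ℂ (Set.range (reducedFamily Φ A₀)) :=
      fun b => Submodule.subset_span ⟨some (A, b), rfl⟩
    induction a using Fin.lastCases with
    | cast b => exact hmem b
    | last =>
      have hlast : Φ A (Fin.last n) = ∑ a, Φ A₀ a - ∑ b : Fin n, Φ A b.castSucc := by
        rw [hΦ.sum_eq_sum A₀ A, Fin.sum_univ_castSucc]
        abel
      rw [SetLike.mem_coe, hlast]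
      exact Submodule.sub_mem _ (Submodule.subset_span ⟨none, rfl⟩)
        (Submodule.sum_mem _ fun b _ => hmem b)

end ReducedFamily

end IsMUBGram

end MUB

/-- **Dimension of the span of the post-measurement states.** Vectors `Φ_{A,a}`
satisfying the MUB Gram condition span a subspace of dimension `k(d-1) + 1`. -/
theorem finrank_span_of_mub_gram
    (d k : ℕ) (hd : 1 ≤ d) (hk : 1 ≤ k)
    (V : Type*) [NormedAddCommGroup V] [InnerProductSpace ℂ V]
    (Φ : Fin k → Fin d → V)
    (hGram : ∀ (A A' : Fin k) (a a' : Fin d),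
      ⟪Φ A a, Φ A' a'⟫_ℂ =
        if A = A' then (if a = a' then 1 else 0) else 1 / (d : ℂ)) :
    Module.finrank ℂ
      (Submodule.span ℂ (Set.range (fun p : Fin k × Fin d => Φ p.1 p.2)))
      = k * (d - 1) + 1 := by
  obtain ⟨n, rfl⟩ : ∃ n, d = n + 1 := ⟨d - 1, by omega⟩
  have hΦ : IsMUBGram Φ := hGram
  rw [← hΦ.span_range_reducedFamily ⟨0, hk⟩,
    finrank_span_eq_card (hΦ.linearIndependent_reducedFamily ⟨0, hk⟩)]
  simp
end

section
/- Let d ≥ 1, n ≥ 1, k ≥ 1, and let s : Fin (n·d²) → Fin k → Fin d be an orthogonal array OA_n(k,d) (when k ≥ 2; for k = 1 assume every symbol occurs n·d times in the single column). Define the matrix H : Matrix (Fin (n·d²)) (Fin k × Fin d) ℂ by H(I,(A,a)) = 1/√(n·d) if s(I)(A) = a and H(I,(A,a)) = 0 otherwise. Then H(I,(A,a)) = 0 whenever s(I)(A) ≠ a, and (Hᴴ · H)((A,a),(A',a')) = δ_{A,A'}δ_{a,a'} + (1−δ_{A,A'})/d for all A, A' ∈ Fin k and a, a' ∈ Fin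 d. -/
open Matrix

/-- **The matrix built from an orthogonal array satisfies the criterion.**
For an orthogonal array `s` (for `k = 1`, column regularity is assumed), the matrix
`H(I,(A,a)) = δ_{a, s(I)(A)}/√(nd)` vanishes where `s I A ≠ a` and its Gram matrix
`Hᴴ * H` equals the MUB Gram matrix. -/
theorem orthogonal_array_matrix_satisfies_criterion
    (d n k : ℕ) (hd : 1 ≤ d) (hn : 1 ≤ n) (hk : 1 ≤ k)
    (s : Fin (n * d ^ 2) → Fin k → Fin d)
    (hOA : ∀ A A' : Fin k, A ≠ A' → ∀ a a' : Fin d,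
      (Finset.univ.filter (fun I : Fin (n * d ^ 2) => s I A = a ∧ s I A' = a')).card = n)
    (hcol : ∀ (A : Fin k) (a : Fin d),
      (Finset.univ.filter (fun I : Fin (n * d ^ 2) => s I A = a)).card = n * d)
    (H : Matrix (Fin (n * d ^ 2)) (Fin k × Fin d) ℂ)
    (hH : ∀ (I : Fin (n * d ^ 2)) (A : Fin k) (a : Fin d),
      H I (A, a) = if s I A = a then (1 / Real.sqrt (n * d) : ℂ) else 0) :
    (∀ (I : Fin (n * d ^ 2)) (A : Fin k) (a : Fin d),
      s I A ≠ a → H I (A, a) = 0) ∧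
    (∀ (A A' : Fin k) (a a' : Fin d),
      (Hᴴ * H) (A, a) (A', a') =
        if A = A' then (if a = a' then 1 else 0) else 1 / (d : ℂ)) := by
  have hnc : (n : ℂ) ≠ 0 := Nat.cast_ne_zero.mpr (by omega)
  have hdc : (d : ℂ) ≠ 0 := Nat.cast_ne_zero.mpr (by omega)
  have hd0 : (d : ℝ) ≠ 0 := by positivity
  have hn0 : (n : ℝ) ≠ 0 := by positivity
  have hnd : (0:ℝ) ≤ (n : ℝ) * d := by positivity
  have hnd0 : ((n : ℝ) * d) ≠ 0 := by positivity
  have hsq : (1 / Real.sqrt (n * d) : ℂ) * (1 / Real.sqrt (n * d) : ℂ)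
      = (1 / ((n : ℂ) * d)) := by
    rw [div_mul_div_comm, one_mul, ← Complex.ofReal_mul, Real.mul_self_sqrt hnd]
    push_cast
    ring
  constructor
  · intro I A a h
    rw [hH]
    simp [h]
  · intro A A' a a'
    have key : (Hᴴ * H) (A, a) (A', a') =
        ∑ I : Fin (n * d ^ 2),
          (if s I A = a ∧ s I A' = a' then (1 / ((n : ℂ) * d)) else 0) := by
      rw [Matrix.mul_apply]
      refine Finset.sum_congr rfl (fun I _ => ?_)
      rw [Matrix.conjTranspose_apply, hH, hH]
      by_cases h1 : s I A = a <;> by_cases h2 : s I A' = a' <;>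
        simp only [h1, h2, if_true, if_false, ite_true, ite_false, and_self,
          and_true, true_and, and_false, false_and, star_zero, zero_mul, mul_zero]
      rw [star_div₀, star_one, Complex.star_def, Complex.conj_ofReal, hsq]
    rw [key, Finset.sum_ite, Finset.sum_const, Finset.sum_const_zero, add_zero,
      nsmul_eq_mul]
    by_cases hAA : A = A'
    · subst hAA
      by_cases haa : a = a'
      · subst haa
        have : (Finset.univ.filter
            (fun I : Fin (n * d ^ 2) => s I A = a ∧ s I A = a)).card = n * d := by
          rw [← hcol A a]; congr 1; ext I; simp
        rw [this]
        simp only [if_pos rfl]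
        push_cast
        rw [mul_one_div]
        exact div_self (mul_ne_zero hnc hdc)
      · have : (Finset.univ.filter
            (fun I : Fin (n * d ^ 2) => s I A = a ∧ s I A = a')).card = 0 := by
          rw [Finset.card_eq_zero, Finset.filter_eq_empty_iff]
          rintro I - ⟨h1, h2⟩
          exact haa (h1 ▸ h2)
        rw [this]
        simp [haa]
    · rw [hOA A A' hAA a a']
      simp only [if_neg hAA]
      field_simp
end
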